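/- arXiv:2208.12324 — 2 statements merged into one kernel-verified Lean document; each statement's English description precedes it below -/
import Mathlib

section
/- Let G be a simple graph and S an independent set of vertices such that every induced (chordless) odd cycle of G contains a vertex of S. Then the induced subgraph G − S is bipartite, and consequently G is properly 3-colorable. -/
/-- A cycle (as a closed walk) is chordless (induced) if every edge of the graph
between vertices of the cycle is an edge of the cycle. -/
def SimpleGraph.Walk.IsChordless' {V : Type*} {G : SimpleGraph V} {v : V}
    (c : G.Walk v v) : Prop :=
  ∀ x y : V, x ∈ c.support → y ∈ c.support → G.Adj x y → s(x, y) ∈ c.edges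

/-!
A shortest odd closed walk is a chordless cycle: a repeated vertex, or a chord, would split it
into two shorter closed walks, one of which is odd. So if every chordless odd cycle meets `S`,
then `G - S` has no odd closed walk and is bipartite; since `S` is independent, giving all of `S`
a third colour extends a 2-colouring of `G - S` to a 3-colouring of `G`.
-/

namespace SimpleGraph

variable {V W : Type*} {G : SimpleGraph V} {u v : V}

namespace Walk

lemma mem_edges_of_length_le_one {p : G.Walk u v} (huv : u ≠ v) (h : p.length ≤ 1) :
    s(u, v) ∈ p.edges := by
  cases p with
  | nil => exact absurd rfl huv
  | cons hadj q =>
    obtain rfl := eq_of_length_eq_zero (p := q) (by simp only [length_cons] at h; omega)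
    simp

lemma IsSubwalk.exists_length_add_eq {c : G.Walk v v} {w : G.Walk u u} (h : w.IsSubwalk c) :
    ∃ r : G.Walk v v, r.length + w.length = c.length := by
  obtain ⟨ru, rv, rfl⟩ := h
  exact ⟨ru.append rv, by simp only [length_append]; omega⟩

lemma IsChordless'.map {H : SimpleGraph W} (f : G ↪g H) {c : G.Walk v v}
    (hc : c.IsChordless') : (c.map f.toHom).IsChordless' := by
  intro x y hx hy hadj
  simp only [support_map, List.mem_map] at hx hy
  obtain ⟨x, hx, rfl⟩ := hx
  obtain ⟨y, hy, rfl⟩ := hy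
  rw [edges_map, List.mem_map]
  exact ⟨s(x, y), hc x y hx hy (f.map_adj_iff.mp hadj), rfl⟩

section ShortestOddClosedWalk

variable {c : G.Walk v v} (hodd : Odd c.length)
  (hmin : ∀ (u : V) (w : G.Walk u u), Odd w.length → c.length ≤ w.length)
include hodd hmin

lemma isPath_tail_of_forall_odd_length_le : c.tail.IsPath := by
  refine isPath_iff_isSubwalk_imp_nil.mpr fun u w hw => ?_
  by_contra hnil
  have hpos : 0 < w.length := not_nil_iff_lt_length.mp hnil
  have hshort : w.length < c.length := by
    have := length_le_of_isSubwalk hw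
    rw [length_tail] at this
    have := hodd.pos
    omega
  obtain ⟨r, hr⟩ := (hw.trans (isSubwalk_rfl c).tail).exists_length_add_eq
  obtain hr_odd | hw_odd : Odd r.length ∨ Odd w.length := by rw [← hr] at hodd; grind
  · have := hmin v r hr_odd
    omega
  · have := hmin u w hw_odd
    omega

lemma isCycle_of_forall_odd_length_le : c.IsCycle := by
  refine isCycle_iff_isPath_tail_and_le_length.mpr
    ⟨isPath_tail_of_forall_odd_length_le hodd hmin, ?_⟩
  have hne : c.length ≠ 1 := fun h => (adj_of_length_eq_one h).ne rfl
  obtain ⟨k, hk⟩ := hodd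
  omega

lemma isChordless'_of_forall_odd_length_le : c.IsChordless' := by
  classical
  intro x y hx hy hadj
  by_contra hchord
  have hy' : y ∈ (c.rotate x hx).support := (mem_support_rotate_iff c x hx).mpr hy
  obtain ⟨p, q, hpq⟩ : ∃ (p : G.Walk x y) (q : G.Walk y x), p.append q = c.rotate x hx :=
    ⟨_, _, take_spec _ hy'⟩
  have hedges : ∀ e ∈ p.edges ++ q.edges, e ∈ c.edges := fun e he => by
    rw [← edges_append, hpq] at he
    exact (rotate_edges c x hx).perm.mem_iff.mp he
  have hlen : p.length + q.length = c.length := by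
    rw [← length_append, hpq, length_rotate]
  -- Closing either arc by the chord gives closed walks of total length `c.length + 2`; the odd
  -- one is not shorter than `c`, so the other arc is a single edge: the chord itself.
  obtain hp | hq : Odd (cons hadj.symm p).length ∨ Odd (cons hadj q).length := by
    simp only [length_cons]; rw [← hlen] at hodd; grind
  · have := hmin y _ hp
    simp only [length_cons] at this
    refine hchord (hedges _ (List.mem_append_right _ ?_))
    exact Sym2.eq_swap ▸ mem_edges_of_length_le_one hadj.ne.symm (by omega)
  · have := hmin x _ hq
    simp only [length_cons] at this
    refine hchord (hedges _ (List.mem_append_left _ ?_))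
    exact mem_edges_of_length_le_one hadj.ne (by omega)

end ShortestOddClosedWalk

theorem exists_isCycle_odd_isChordless' (c : G.Walk v v) (hc : Odd c.length) :
    ∃ (u : V) (d : G.Walk u u), d.IsCycle ∧ Odd d.length ∧ d.IsChordless' := by
  classical
  have hex : ∃ n, ∃ (u : V) (w : G.Walk u u), Odd w.length ∧ w.length = n :=
    ⟨_, v, c, hc, rfl⟩
  obtain ⟨u, d, hodd, hlen⟩ := Nat.find_spec hex
  have hmin : ∀ (x : V) (w : G.Walk x x), Odd w.length → d.length ≤ w.length :=
    fun x w hw => hlen ▸ Nat.find_min' hex ⟨x, w, hw, rfl⟩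
  exact ⟨u, d, isCycle_of_forall_odd_length_le hodd hmin, hodd,
    isChordless'_of_forall_odd_length_le hodd hmin⟩

end Walk

theorem colorable_two_of_forall_isCycle_isChordless'_even
    (h : ∀ (u : V) (c : G.Walk u u), c.IsCycle → c.IsChordless' → Even c.length) :
    G.Colorable 2 := by
  refine two_colorable_iff_forall_loop_even.mpr fun v c => Nat.not_odd_iff_even.mp fun hc => ?_
  obtain ⟨u, d, hcyc, hodd, hch⟩ := c.exists_isCycle_odd_isChordless' hc
  exact Nat.not_even_iff_odd.mpr hodd (h u d hcyc hch)

theorem Colorable.succ_of_induce_compl_of_isIndepSet {n : ℕ} {s : Set V}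
    (hc : (G.induce sᶜ).Colorable n) (hs : G.IsIndepSet s) : G.Colorable (n + 1) := by
  classical
  obtain ⟨c⟩ := hc
  refine ⟨Coloring.mk (fun v => if hv : v ∈ s then Fin.last n else (c ⟨v, hv⟩).castSucc) ?_⟩
  intro a b hab
  by_cases ha : a ∈ s <;> by_cases hb : b ∈ s <;> simp only [ha, hb, dif_pos]
  · exact absurd hab (hs ha hb hab.ne)
  · exact (Fin.castSucc_ne_last _).symm
  · exact Fin.castSucc_ne_last _
  · have hab' : (G.induce sᶜ).Adj ⟨a, ha⟩ ⟨b, hb⟩ := hab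
    exact fun h => c.valid hab' (Fin.castSucc_injective n h)

end SimpleGraph

open SimpleGraph in
theorem bipartite_complement_and_three_colorable_general {V : Type*}
    (G : SimpleGraph V) (S : Set V)
    (hindep : ∀ a ∈ S, ∀ b ∈ S, ¬ G.Adj a b)
    (hmeet : ∀ (v : V) (c : G.Walk v v), c.IsCycle → Odd c.length →
      c.IsChordless' → ∃ x ∈ S, x ∈ c.support) :
    (G.induce Sᶜ).Colorable 2 ∧ G.Colorable 3 := by
  have hbip : (G.induce Sᶜ).Colorable 2 := by
    refine colorable_two_of_forall_isCycle_isChordless'_even fun u c hcyc hch => ?_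
    by_contra hodd
    let f := Embedding.induce Sᶜ (G := G)
    obtain ⟨x, hxS, hx⟩ := hmeet _ (c.map f.toHom)
      ((Walk.isCycle_map_iff_of_injective f.injective).mpr hcyc)
      (by rwa [Walk.length_map, ← Nat.not_even_iff_odd]) (hch.map f)
    rw [Walk.support_map, List.mem_map] at hx
    obtain ⟨y, -, rfl⟩ := hx
    exact y.2 hxS
  exact ⟨hbip, hbip.succ_of_induce_compl_of_isIndepSet fun a ha b hb _ => hindep a ha b hb⟩

/-- If `S` is an independent set of vertices meeting every induced (chordless)
odd cycle, then the induced subgraph on the complement of `S` is bipartite, and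
the graph is properly 3-colorable. -/
theorem bipartite_complement_and_three_colorable {V : Type*} [Fintype V]
    (G : SimpleGraph V) (S : Set V)
    (hindep : ∀ a ∈ S, ∀ b ∈ S, ¬ G.Adj a b)
    (hmeet : ∀ (v : V) (c : G.Walk v v), c.IsCycle → Odd c.length →
      c.IsChordless' → ∃ x ∈ S, x ∈ c.support) :
    (G.induce Sᶜ).Colorable 2 ∧ G.Colorable 3 :=
  bipartite_complement_and_three_colorable_general G S hindep hmeet
end

section
/- Let G be a simple graph (the 'intersection graph'), let 𝒞 be a finite family of subsets of V(G) (the 'chordless odd cycles'), and let f : 𝒞 → V(G) be a choice function with f(C) ∈ C for all C ∈ 𝒞 (the 'ground edge' of C). Suppose that whenever C, C' ∈ 𝒞 and f(C) is adjacent to f(C') in G, we have f(C) ∈ C' and f(C') ∈ C. Then there exists a set S ⊆ V(G) that is independent in G and satisfies S ∩ C ≠ ∅ for every C ∈ 𝒞. -/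
/-- Abstract form of the main theorem's construction: given a finite family `𝒞`
of subsets of the vertices of a graph `G`, and a choice function `f` picking an
element of each member of `𝒞`, such that whenever the chosen elements of two
members are adjacent each lies in the other member, there exists an independent
set meeting every member of `𝒞`. -/
theorem independent_transversal_of_ground_choice {V : Type*} [Fintype V]
    (G : SimpleGraph V) (𝒞 : Finset (Set V)) (f : Set V → V)
    (hf : ∀ C ∈ 𝒞, f C ∈ C)
    (hkey : ∀ C ∈ 𝒞, ∀ C' ∈ 𝒞, G.Adj (f C) (f C') → f C ∈ C' ∧ f C' ∈ C) :
    ∃ S : Set V, (∀ a ∈ S, ∀ b ∈ S, ¬ G.Adj a b) ∧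
      ∀ C ∈ 𝒞, (S ∩ C).Nonempty := by
  classical
  suffices h : ∀ 𝒟 : Finset (Set V), 𝒟 ⊆ 𝒞 →
      ∃ S : Set V, (∀ s ∈ S, ∃ C ∈ 𝒟, s = f C) ∧
        (∀ a ∈ S, ∀ b ∈ S, ¬ G.Adj a b) ∧ ∀ C ∈ 𝒟, (S ∩ C).Nonempty by
    obtain ⟨S, _, h2, h3⟩ := h 𝒞 le_rfl
    exact ⟨S, h2, h3⟩
  intro 𝒟
  induction 𝒟 using Finset.induction_on with
  | empty => exact fun _ => ⟨∅, by simp, by simp, by simp⟩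
  | @insert C 𝒟 hC ih =>
    intro hsub
    have hC𝒞 : C ∈ 𝒞 := hsub (Finset.mem_insert_self _ _)
    have h𝒟𝒞 : 𝒟 ⊆ 𝒞 := fun x hx => hsub (Finset.mem_insert_of_mem hx)
    obtain ⟨S, hS1, hS2, hS3⟩ := ih h𝒟𝒞
    by_cases hmeet : (S ∩ C).Nonempty
    · refine ⟨S, fun s hs => ?_, hS2, fun D hD => ?_⟩
      · obtain ⟨C', hC', hs'⟩ := hS1 s hs
        exact ⟨C', Finset.mem_insert_of_mem hC', hs'⟩
      · rcases Finset.mem_insert.mp hD with rfl | hD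
        · exact hmeet
        · exact hS3 D hD
    · have hnotadj : ∀ s ∈ S, ¬ G.Adj (f C) s := by
        intro s hs hadj
        obtain ⟨C', hC', rfl⟩ := hS1 s hs
        have := (hkey C hC𝒞 C' (h𝒟𝒞 hC') hadj).2
        exact hmeet ⟨f C', hs, this⟩
      refine ⟨insert (f C) S, ?_, ?_, ?_⟩
      · rintro s hs
        rcases hs with rfl | hs
        · exact ⟨C, Finset.mem_insert_self _ _, rfl⟩
        · obtain ⟨C', hC', hs'⟩ := hS1 s hs
          exact ⟨C', Finset.mem_insert_of_mem hC', hs'⟩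
      · rintro a ha b hb hadj
        rcases ha with rfl | ha <;> rcases hb with rfl | hb
        · exact G.irrefl hadj
        · exact hnotadj b hb hadj
        · exact hnotadj a ha hadj.symm
        · exact hS2 a ha b hb hadj
      · intro D hD
        rcases Finset.mem_insert.mp hD with rfl | hD
        · exact ⟨f D, Set.mem_insert _ _, hf D hC𝒞⟩
        · obtain ⟨x, hx1, hx2⟩ := hS3 D hD
          exact ⟨x, Set.mem_insert_of_mem _ hx1, hx2⟩
end
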